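/- Let f and g be nonzero relatively prime polynomials in ℂ[X, Y] of total degrees m and n respectively, each of positive degree in the variable Y. Then there exists a nonzero univariate polynomial h ∈ ℂ[X] of degree at most m·n such that h(x) = 0 for every (x, y) ∈ ℂ² with f(x, y) = 0 and g(x, y) = 0. -/

import Mathlib

/-!
View `f` and `g` as polynomials in `Y` over `ℂ[X]`, of `Y`-degrees `p ≤ m` and `q ≤ n`, and take
for `h` their resultant, the determinant of the Sylvester matrix. An identity
`f * A + g * B = res` shows that `h` vanishes at the `x`-coordinate of every common zero. If `h`
were zero, some nonzero pair with `deg A < q`, `deg B < p` would satisfy `f * A + g * B = 0`;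
relative primality then gives `g ∣ A` and `f ∣ B`, so `A = B = 0` by degree. Finally, in the
Sylvester matrix the entry in row `i` and in the column of `Y ^ j * g` (resp. `Y ^ j * f`) has
degree at most `n + j - i` (resp. `m + j - i`), so every term of the determinant has degree at most
`p * n + q * m - p * q ≤ m * n`.
-/

namespace MvPolynomial

variable {R : Type*} [CommRing R]

theorem totalDegree_det_le {ι σ : Type*} [Fintype ι] [DecidableEq ι]
    (A : Matrix ι ι (MvPolynomial σ R)) (r c : ι → ℕ)
    (hA : ∀ i j, A i j ≠ 0 → (A i j).totalDegree + r i ≤ c j) :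
    A.det.totalDegree ≤ ∑ j, c j - ∑ i, r i := by
  rw [Matrix.det_apply]
  refine (totalDegree_finsetSum _ _).trans (Finset.sup_le fun τ _ => ?_)
  refine (totalDegree_smul_le _ _).trans ?_
  by_cases hτ : ∃ j, A (τ j) j = 0
  · obtain ⟨j, hj⟩ := hτ
    rw [Finset.prod_eq_zero (f := fun i => A (τ i) i) (Finset.mem_univ j) hj, totalDegree_zero]
    exact Nat.zero_le _
  · have key : ∑ j, ((A (τ j) j).totalDegree + r (τ j)) ≤ ∑ j, c j :=
      Finset.sum_le_sum fun j _ => hA _ _ fun h => hτ ⟨j, h⟩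
    rw [Finset.sum_add_distrib, Equiv.sum_comp τ r] at key
    exact (totalDegree_finsetProd _ _).trans (by omega)

theorem natDegree_uniqueAlgEquiv_le {σ : Type*} [Unique σ] (p : MvPolynomial σ R) :
    (uniqueAlgEquiv R σ p).natDegree ≤ p.totalDegree := by
  refine Polynomial.natDegree_le_iff_coeff_eq_zero.mpr fun k hk => ?_
  rw [coeff_uniqueAlgEquiv]
  exact coeff_eq_zero_of_totalDegree_lt (by
    rwa [Finsupp.support_single _ (by omega), Finset.sum_singleton, Finsupp.single_eq_same])

theorem eval_uniqueAlgEquiv (p : MvPolynomial (Fin 1) R) (x : R) :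
    (uniqueAlgEquiv R (Fin 1) p).eval x = eval ![x] p :=
  eval₂_uniqueAlgEquiv (a := ![x])

/-- `X 0` is `X` and `X 1` is `Y`: the swap makes `Y` the outer variable. -/
noncomputable def polynomialYEquiv (R : Type*) [CommRing R] :
    MvPolynomial (Fin 2) R ≃ₐ[R] Polynomial (MvPolynomial (Fin 1) R) :=
  (renameEquiv R (Equiv.swap 0 1)).trans (finSuccEquiv R 1)

theorem natDegree_polynomialYEquiv (f : MvPolynomial (Fin 2) R) :
    (polynomialYEquiv R f).natDegree = f.degreeOf 1 := by
  rw [polynomialYEquiv, AlgEquiv.trans_apply, natDegree_finSuccEquiv, renameEquiv_apply]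
  simpa using degreeOf_rename_of_injective (Equiv.injective (Equiv.swap (0 : Fin 2) 1)) (p := f) 1

theorem totalDegree_coeff_polynomialYEquiv_add_le (f : MvPolynomial (Fin 2) R) (i : ℕ)
    (hi : (polynomialYEquiv R f).coeff i ≠ 0) :
    ((polynomialYEquiv R f).coeff i).totalDegree + i ≤ f.totalDegree := by
  rw [polynomialYEquiv, AlgEquiv.trans_apply, renameEquiv_apply] at hi ⊢
  exact (totalDegree_coeff_finSuccEquiv_add_le _ i hi).trans (totalDegree_rename_le _ _)

theorem eval_eq_eval₂_polynomialYEquiv (f : MvPolynomial (Fin 2) R) (x y : R) :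
    eval ![x, y] f = (polynomialYEquiv R f).eval₂ (eval ![x]) y := by
  have hxy : (Fin.cons y ![x] : Fin 2 → R) ∘ Equiv.swap 0 1 = ![x, y] := by
    funext i; fin_cases i <;> rfl
  rw [polynomialYEquiv, AlgEquiv.trans_apply, renameEquiv_apply, ← Polynomial.eval_map,
    ← eval_eq_eval_mv_eval', eval_rename, hxy]

end MvPolynomial

namespace Polynomial

variable {R : Type*} [CommRing R]

theorem totalDegree_resultant_le {σ : Type*} (F G : (MvPolynomial σ R)[X]) {p q M N : ℕ}
    (hpM : p ≤ M) (hqN : q ≤ N)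
    (hF : ∀ i, F.coeff i ≠ 0 → (F.coeff i).totalDegree + i ≤ M)
    (hG : ∀ i, G.coeff i ≠ 0 → (G.coeff i).totalDegree + i ≤ N) :
    (resultant F G p q).totalDegree ≤ M * N := by
  let c : Fin (p + q) → ℕ := Fin.addCases (fun j => N + j) (fun j => M + j)
  refine (MvPolynomial.totalDegree_det_le _ (fun i : Fin (p + q) => (i : ℕ)) c
    fun i j hij => ?_).trans ?_
  · induction j using Fin.addCases with
    | left j =>
      simp only [sylvester, Matrix.of_apply, Fin.addCases_left, c] at hij ⊢
      split_ifs at hij ⊢ with hi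
      · have := hG _ hij; simp only [Set.mem_Icc] at hi; omega
      · exact absurd rfl hij
    | right j =>
      simp only [sylvester, Matrix.of_apply, Fin.addCases_right, c] at hij ⊢
      split_ifs at hij ⊢ with hi
      · have := hF _ hij; simp only [Set.mem_Icc] at hi; omega
      · exact absurd rfl hij
  · obtain ⟨a, rfl⟩ := Nat.exists_eq_add_of_le hpM
    obtain ⟨b, rfl⟩ := Nat.exists_eq_add_of_le hqN
    simp only [Fin.sum_univ_add, c, Fin.addCases_left, Fin.addCases_right, Fin.val_castAdd,
      Fin.val_natAdd, Finset.sum_add_distrib, Finset.sum_const, Finset.card_univ, Fintype.card_fin,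
      smul_eq_mul]
    apply Nat.sub_le_of_le_add
    nlinarith [Nat.zero_le (a * b)]

theorem exists_ne_zero_sylvesterMap_eq_zero [IsDomain R] {f g : R[X]} {m n : ℕ}
    (hf : f.natDegree ≤ m) (hg : g.natDegree ≤ n) (h : resultant f g m n = 0) :
    ∃ x ≠ 0, sylvesterMap f g hf hg x = 0 := by
  let b₁ := ((degreeLT.basis R m).prod (degreeLT.basis R n)).reindex finSumFinEquiv
  let b₂ := degreeLT.basis R (m + n)
  obtain ⟨v, hv, hMv⟩ := Matrix.exists_mulVec_eq_zero_iff.mpr h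
  rw [← toMatrix_sylvesterMap' f g hf hg] at hMv
  refine ⟨b₁.equivFun.symm v, (LinearEquiv.map_ne_zero_iff _).mpr hv, ?_⟩
  have := LinearMap.toMatrix_mulVec_repr b₁ b₂ (sylvesterMap f g hf hg) (b₁.equivFun.symm v)
  rw [← Module.Basis.equivFun_apply, LinearEquiv.apply_symm_apply, hMv] at this
  exact b₂.repr.map_eq_zero_iff.mp (DFunLike.coe_injective this.symm)

theorem resultant_ne_zero_of_isRelPrime [IsDomain R] [UniqueFactorizationMonoid R]
    {f g : R[X]} (h : IsRelPrime f g) : resultant f g ≠ 0 := by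
  have eq_zero_of_dvd_mul : ∀ {a b c : R[X]},
      IsRelPrime a b → a ∣ b * c → c.degree < a.natDegree → c = 0 := by
    intro a b c hab hdvd hc
    by_contra hc0
    have := natDegree_le_of_dvd (hab.dvd_of_dvd_mul_left hdvd) hc0
    rw [degree_eq_natDegree hc0, Nat.cast_lt] at hc
    omega
  intro h0
  obtain ⟨⟨⟨p, hp⟩, ⟨q, hq⟩⟩, hne, hpq⟩ :=
    exists_ne_zero_sylvesterMap_eq_zero le_rfl le_rfl h0
  rw [mem_degreeLT] at hp hq
  have hfg : f * q + g * p = 0 := congrArg Subtype.val hpq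
  have hp0 : p = 0 := eq_zero_of_dvd_mul h ⟨-q, by linear_combination hfg⟩ hp
  have hq0 : q = 0 := eq_zero_of_dvd_mul h.symm ⟨-p, by linear_combination hfg⟩ hq
  subst hp0 hq0
  exact hne rfl

theorem map_resultant_eq_zero_of_eval₂_eq_zero {S : Type*} [CommRing S] (φ : R →+* S)
    {f g : R[X]} {m n : ℕ} (hf : f.natDegree ≤ m) (hg : g.natDegree ≤ n) (hmn : m ≠ 0 ∨ n ≠ 0)
    {y : S} (hfy : f.eval₂ φ y = 0) (hgy : g.eval₂ φ y = 0) : φ (resultant f g m n) = 0 := by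
  obtain ⟨p, q, -, -, hpq⟩ := exists_mul_add_mul_eq_C_resultant f g hf hg hmn
  simpa [hfy, hgy] using congrArg (eval₂ φ y) hpq.symm

end Polynomial

theorem IsRelPrime.map_mulEquiv {M N : Type*} [Monoid M] [Monoid N] (e : M ≃* N) {a b : M}
    (h : IsRelPrime a b) : IsRelPrime (e a) (e b) := by
  intro d hda hdb
  have hd : IsUnit (e.symm d) :=
    h (by simpa using map_dvd e.symm hda) (by simpa using map_dvd e.symm hdb)
  simpa using hd.map e

open MvPolynomial

theorem newton_elimination_general (f g : MvPolynomial (Fin 2) ℂ)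
    (hrp : IsRelPrime f g) (m n : ℕ) (hm : f.totalDegree = m) (hn : g.totalDegree = n)
    (hfY : 0 < f.degreeOf 1) :
    ∃ h : Polynomial ℂ, h ≠ 0 ∧ h.natDegree ≤ m * n ∧
      ∀ x y : ℂ, eval ![x, y] f = 0 → eval ![x, y] g = 0 → h.eval x = 0 := by
  subst hm hn
  set F := polynomialYEquiv ℂ f
  set G := polynomialYEquiv ℂ g
  have hFG : IsRelPrime F G := hrp.map_mulEquiv (polynomialYEquiv ℂ).toMulEquiv
  refine ⟨uniqueAlgEquiv ℂ (Fin 1) (F.resultant G), ?_, ?_, ?_⟩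
  · exact (map_ne_zero_iff _ (AlgEquiv.injective _)).mpr
      (Polynomial.resultant_ne_zero_of_isRelPrime hFG)
  · refine (natDegree_uniqueAlgEquiv_le _).trans (Polynomial.totalDegree_resultant_le F G ?_ ?_
      (totalDegree_coeff_polynomialYEquiv_add_le f) (totalDegree_coeff_polynomialYEquiv_add_le g))
    · exact (natDegree_polynomialYEquiv f).trans_le (degreeOf_le_totalDegree f 1)
    · exact (natDegree_polynomialYEquiv g).trans_le (degreeOf_le_totalDegree g 1)
  · intro x y hfxy hgxy
    rw [eval_uniqueAlgEquiv]
    refine Polynomial.map_resultant_eq_zero_of_eval₂_eq_zero (eval ![x]) le_rfl le_rfl ?_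
      ((eval_eq_eval₂_polynomialYEquiv f x y).symm.trans hfxy)
      ((eval_eq_eval₂_polynomialYEquiv g x y).symm.trans hgxy)
    exact Or.inl (by rw [natDegree_polynomialYEquiv]; omega)

/-- Newton's elimination: given two nonzero relatively prime bivariate polynomials
over `ℂ` of total degrees `m`, `n`, each of positive degree in `Y`, there is a
nonzero univariate polynomial of degree at most `m * n` vanishing at the
`x`-coordinate of every common zero. -/
theorem newton_elimination (f g : MvPolynomial (Fin 2) ℂ) (hf : f ≠ 0) (hg : g ≠ 0)
    (hrp : IsRelPrime f g) (m n : ℕ) (hm : f.totalDegree = m) (hn : g.totalDegree = n)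
    (hfY : 0 < f.degreeOf 1) (hgY : 0 < g.degreeOf 1) :
    ∃ h : Polynomial ℂ, h ≠ 0 ∧ h.natDegree ≤ m * n ∧
      ∀ x y : ℂ, eval ![x, y] f = 0 → eval ![x, y] g = 0 → h.eval x = 0 :=
  newton_elimination_general f g hrp m n hm hn hfY
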